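/- Let X be a nonnegative random variable with CDF F that is continuous and strictly increasing on [0,∞), with F(0) = 0 and finite positive mean μ_F. Then the following are equivalent: (i) X is NBUE, i.e., for every t ≥ 0 with P(X > t) > 0, E[X − t | X > t] ≤ μ_F; (ii) T_F(p) ≥ p·μ_F for every p ∈ [0,1], i.e., the scaled TTT transform S_F = T_F/μ_F dominates the identity function on [0,1]. -/

import Mathlib

/-!
With `μ = ∫₀^∞ (1 - F)` (layer cake), NBUE says that the tail integral `∫_t^∞ (1 - F)` is at
most `μ (1 - F t)` for every `t ≥ 0`; this also holds trivially when `F t = 1`. Since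
`T_F(p) = μ - ∫_s^∞ (1 - F)` for `s = F⁻¹(p)`, and `F s ≥ p` by continuity, NBUE at `s` gives
`T_F(p) ≥ p μ`. Conversely `F⁻¹(F t) ≤ t`, so `μ - ∫_t^∞ (1 - F) ≥ T_F(F t) ≥ F(t) μ`.
-/

open MeasureTheory Set

noncomputable section

/-- Taken in `EReal`, so that it is `⊤` when `F` never reaches `p`. -/
def leftQuantile (F : ℝ → ℝ) (p : ℝ) : EReal :=
  sInf ((fun u : ℝ => (u : EReal)) '' {u | p ≤ F u})

def totalTimeOnTest (F : ℝ → ℝ) (p : ℝ) : ℝ :=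
  ∫ x in {x : ℝ | 0 < x ∧ (x : EReal) < leftQuantile F p}, (1 - F x)

end

section Quantile

variable {F : ℝ → ℝ} {p s t : ℝ}

lemma leftQuantile_le (h : p ≤ F t) : leftQuantile F p ≤ t :=
  sInf_le ⟨t, h, rfl⟩

lemma leftQuantile_eq_of_isLeast (h : IsLeast {u | p ≤ F u} s) : leftQuantile F p = s :=
  (EReal.coe_strictMono.monotone.map_isLeast h).isGLB.sInf_eq

lemma leftQuantile_eq_top (h : ∀ u, F u < p) : leftQuantile F p = ⊤ := by
  simp [leftQuantile, h]

lemma totalTimeOnTest_nonneg (hF1 : ∀ x, F x ≤ 1) : 0 ≤ totalTimeOnTest F p :=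
  integral_nonneg fun x => sub_nonneg.2 (hF1 x)

lemma totalTimeOnTest_eq_of_isLeast (h : IsLeast {u | p ≤ F u} s) :
    totalTimeOnTest F p = ∫ x in Ioc 0 s, (1 - F x) := by
  rw [integral_Ioc_eq_integral_Ioo, totalTimeOnTest, leftQuantile_eq_of_isLeast h]
  simp only [EReal.coe_lt_coe_iff]
  rfl

lemma totalTimeOnTest_eq_of_forall_lt (h : ∀ u, F u < p) :
    totalTimeOnTest F p = ∫ x in Ioi 0, (1 - F x) := by
  simp only [totalTimeOnTest, leftQuantile_eq_top h, EReal.coe_lt_top, and_true]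
  rfl

lemma totalTimeOnTest_le_integral_Ioc (hF1 : ∀ x, F x ≤ 1)
    (hint : IntegrableOn (fun x => 1 - F x) (Ioc 0 t)) (h : p ≤ F t) :
    totalTimeOnTest F p ≤ ∫ x in Ioc 0 t, (1 - F x) := by
  refine setIntegral_mono_set hint (ae_of_all _ fun x => sub_nonneg.2 (hF1 x)) ?_
  refine LE.le.eventuallyLE fun x ⟨hx0, hxq⟩ => ⟨hx0, ?_⟩
  exact_mod_cast (hxq.trans_le (leftQuantile_le h)).le

end Quantile

section Tail

variable {F : ℝ → ℝ}

lemma integral_Ioi_one_sub_eq_zero (hmono : Monotone F) (hF1 : ∀ x, F x ≤ 1) {t : ℝ}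
    (ht : F t = 1) : ∫ x in Ioi t, (1 - F x) = 0 :=
  setIntegral_eq_zero_of_forall_eq_zero fun x hx => by
    rw [le_antisymm (hF1 x) (ht ▸ hmono hx.le), sub_self]

lemma forall_div_le_iff_forall_le_mul (hmono : Monotone F) (hF1 : ∀ x, F x ≤ 1) (μ : ℝ) :
    (∀ t, 0 ≤ t → F t < 1 → (∫ x in Ioi t, (1 - F x)) / (1 - F t) ≤ μ) ↔
      ∀ t, 0 ≤ t → ∫ x in Ioi t, (1 - F x) ≤ μ * (1 - F t) := by
  refine forall₂_congr fun t _ => ?_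
  rcases (hF1 t).lt_or_eq with hlt | heq
  · simp only [hlt, div_le_iff₀ (sub_pos.2 hlt), forall_const]
  · simp [heq, integral_Ioi_one_sub_eq_zero hmono hF1 heq]

lemma mul_le_totalTimeOnTest_of_forall_integral_Ioi_le (hcont : Continuous F)
    (hF1 : ∀ x, F x ≤ 1) (hneg : ∀ x < 0, F x = 0)
    (hint : IntegrableOn (fun x => 1 - F x) (Ioi 0))
    (htail : ∀ t, 0 ≤ t → ∫ x in Ioi t, (1 - F x) ≤ (∫ x in Ioi 0, (1 - F x)) * (1 - F t))
    {p : ℝ} (hp : p ∈ Icc 0 1) :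
    p * ∫ x in Ioi 0, (1 - F x) ≤ totalTimeOnTest F p := by
  set μ := ∫ x in Ioi 0, (1 - F x)
  have hμ : 0 ≤ μ := integral_nonneg fun x => sub_nonneg.2 (hF1 x)
  rcases hp.1.eq_or_lt with rfl | hp0
  · simpa using totalTimeOnTest_nonneg hF1
  by_cases hreach : ∃ u, p ≤ F u
  · have hS0 : ∀ u ∈ {u | p ≤ F u}, 0 ≤ u := fun u hu => by
      by_contra! hu0
      linarith [hneg u hu0, mem_ofPred.1 hu]
    obtain ⟨hs, hlb⟩ := (isClosed_le continuous_const hcont).isLeast_csInf hreach ⟨0, hS0⟩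
    set s := sInf {u | p ≤ F u}
    have hs0 : 0 ≤ s := hS0 s hs
    rw [totalTimeOnTest_eq_of_isLeast ⟨hs, hlb⟩, ← intervalIntegral.integral_of_le hs0,
      ← intervalIntegral.integral_Ioi_sub_Ioi hint hs0]
    nlinarith [htail s hs0, mul_le_mul_of_nonneg_left (mem_ofPred.1 hs) hμ]
  · push Not at hreach
    rw [totalTimeOnTest_eq_of_forall_lt hreach]
    exact mul_le_of_le_one_left hμ hp.2

lemma integral_Ioi_le_of_forall_mul_le_totalTimeOnTest (hF0 : ∀ x, 0 ≤ F x)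
    (hF1 : ∀ x, F x ≤ 1) (hint : IntegrableOn (fun x => 1 - F x) (Ioi 0))
    (httt : ∀ p ∈ Icc (0 : ℝ) 1, p * (∫ x in Ioi 0, (1 - F x)) ≤ totalTimeOnTest F p)
    {t : ℝ} (ht : 0 ≤ t) :
    ∫ x in Ioi t, (1 - F x) ≤ (∫ x in Ioi 0, (1 - F x)) * (1 - F t) := by
  have hT := totalTimeOnTest_le_integral_Ioc (t := t) hF1
    (hint.mono_set Ioc_subset_Ioi_self) le_rfl
  rw [← intervalIntegral.integral_of_le ht,
    ← intervalIntegral.integral_Ioi_sub_Ioi hint ht] at hT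
  linarith [httt (F t) ⟨hF0 t, hF1 t⟩]

end Tail

section Distribution

variable {Ω : Type*} [MeasureSpace Ω] {X : Ω → ℝ} {F : ℝ → ℝ}

lemma eq_zero_of_neg (hnonneg : ∀ ω, 0 ≤ X ω) (hF : ∀ x, F x = (volume {ω | X ω ≤ x}).toReal)
    {x : ℝ} (hx : x < 0) : F x = 0 := by
  have : {ω | X ω ≤ x} = ∅ := eq_empty_of_forall_notMem fun ω hω => by
    linarith [hnonneg ω, mem_ofPred.1 hω]
  rw [hF, this, measure_empty, ENNReal.toReal_zero]

variable [IsProbabilityMeasure (volume : Measure Ω)]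

lemma cdf_map_eq (hX : AEMeasurable X) (hF : ∀ x, F x = (volume {ω | X ω ≤ x}).toReal) :
    ProbabilityTheory.cdf (volume.map X) = F := by
  have := Measure.isProbabilityMeasure_map (μ := volume) hX
  ext x
  rw [ProbabilityTheory.cdf_eq_real, measureReal_def, Measure.map_apply_of_aemeasurable hX
    measurableSet_Iic, hF]
  rfl

lemma one_sub_eq_measureReal_lt (hX : AEMeasurable X)
    (hF : ∀ x, F x = (volume {ω | X ω ≤ x}).toReal) (t : ℝ) :
    1 - F t = volume.real {ω | t < X ω} := by
  rw [hF, ← measureReal_def, ← probReal_compl_eq_one_sub₀ (s := {ω | X ω ≤ t})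
    (hX.nullMeasurable measurableSet_Iic)]
  congr 1
  ext ω
  simp

lemma measure_lt_ne_zero_iff (hX : AEMeasurable X)
    (hF : ∀ x, F x = (volume {ω | X ω ≤ x}).toReal) {t : ℝ} :
    volume {ω | t < X ω} ≠ 0 ↔ F t < 1 := by
  rw [← sub_pos, one_sub_eq_measureReal_lt hX hF, measureReal_nonneg.lt_iff_ne',
    Ne, Ne, measureReal_eq_zero_iff]

lemma integral_eq_integral_Ioi_one_sub (hnonneg : ∀ ω, 0 ≤ X ω) (hint : Integrable X)
    (hF : ∀ x, F x = (volume {ω | X ω ≤ x}).toReal) :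
    ∫ ω, X ω = ∫ t in Ioi 0, (1 - F t) := by
  simp_rw [one_sub_eq_measureReal_lt hint.aemeasurable hF]
  exact hint.integral_eq_integral_meas_lt (ae_of_all _ hnonneg)

lemma integrableOn_one_sub (hnonneg : ∀ ω, 0 ≤ X ω) (hint : Integrable X)
    (hF : ∀ x, F x = (volume {ω | X ω ≤ x}).toReal) :
    IntegrableOn (fun t => 1 - F t) (Ioi 0) := by
  have hcdf := cdf_map_eq hint.aemeasurable hF
  have hmono : Monotone F := hcdf ▸ ProbabilityTheory.monotone_cdf _
  refine ⟨(measurable_const.sub hmono.measurable).aestronglyMeasurable, ?_⟩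
  rw [hasFiniteIntegral_iff_ofReal
    (ae_of_all _ fun t => sub_nonneg.2 (hcdf ▸ ProbabilityTheory.cdf_le_one _ t))]
  calc ∫⁻ t in Ioi 0, ENNReal.ofReal (1 - F t) = ∫⁻ t in Ioi 0, volume {ω | t < X ω} := by
        simp only [one_sub_eq_measureReal_lt hint.aemeasurable hF,
          ofReal_measureReal (measure_ne_top _ _)]
    _ = ∫⁻ ω, ENNReal.ofReal (X ω) :=
        (lintegral_eq_lintegral_meas_lt _ (ae_of_all _ hnonneg) hint.aemeasurable).symm
    _ < ⊤ := hint.lintegral_lt_top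

end Distribution

theorem nbue_iff_scaled_ttt_dominates_id_general
    {Ω : Type*} [MeasureSpace Ω] [IsProbabilityMeasure (volume : Measure Ω)]
    (X : Ω → ℝ) (hnonneg : ∀ ω, 0 ≤ X ω)
    (hint : Integrable X)
    (F : ℝ → ℝ) (hF : ∀ x, F x = (volume {ω | X ω ≤ x}).toReal)
    (hcont : Continuous F)
    (μ : ℝ) (hμ : μ = ∫ ω, X ω) :
    (∀ t : ℝ, 0 ≤ t → volume {ω | t < X ω} ≠ 0 →
        (∫ x in Set.Ioi t, (1 - F x)) / (1 - F t) ≤ μ)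
    ↔ (∀ p ∈ Set.Icc (0:ℝ) 1,
        p * μ ≤ ∫ x in {x : ℝ | 0 < x ∧
            (x : EReal) < sInf ((fun u : ℝ => (u : EReal)) '' {u : ℝ | p ≤ F u})},
          (1 - F x)) := by
  have hcdf := cdf_map_eq hint.aemeasurable hF
  have hF0 : ∀ x, 0 ≤ F x := hcdf ▸ ProbabilityTheory.cdf_nonneg _
  have hF1 : ∀ x, F x ≤ 1 := hcdf ▸ ProbabilityTheory.cdf_le_one _
  have hmono : Monotone F := hcdf ▸ ProbabilityTheory.monotone_cdf _
  have hint' := integrableOn_one_sub hnonneg hint hF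
  simp only [measure_lt_ne_zero_iff hint.aemeasurable hF]
  change _ ↔ ∀ p ∈ Icc (0 : ℝ) 1, p * μ ≤ totalTimeOnTest F p
  rw [forall_div_le_iff_forall_le_mul hmono hF1, hμ,
    integral_eq_integral_Ioi_one_sub hnonneg hint hF]
  exact ⟨fun htail p => mul_le_totalTimeOnTest_of_forall_integral_Ioi_le hcont hF1
      (fun _ => eq_zero_of_neg hnonneg hF) hint' htail,
    fun httt t => integral_Ioi_le_of_forall_mul_le_totalTimeOnTest hF0 hF1 hint' httt⟩

/-- Let `X` be a nonnegative random variable with CDF `F` continuous and strictly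
increasing on `[0,∞)`, `F(0) = 0`, and finite positive mean `μ`. The following are
equivalent:
(i) `X` is NBUE: for every `t ≥ 0` with `P(X > t) > 0`, the mean residual life
`E[X − t | X > t] = (∫_t^∞ (1 − F(x)) dx)/(1 − F(t))` is at most `μ`;
(ii) `T_F(p) ≥ p·μ` for every `p ∈ [0,1]`, i.e. the scaled TTT transform `T_F/μ`
dominates the identity on `[0,1]`. Here `T_F(p) = ∫_0^{F^{-1}(p)} (1 − F(x)) dx`
with `F^{-1}(p) = inf {u : F(u) ≥ p}` taken in the extended reals. -/
theorem nbue_iff_scaled_ttt_dominates_id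
    {Ω : Type*} [MeasureSpace Ω] [IsProbabilityMeasure (volume : Measure Ω)]
    (X : Ω → ℝ) (hmeas : Measurable X) (hnonneg : ∀ ω, 0 ≤ X ω)
    (hint : Integrable X)
    (F : ℝ → ℝ) (hF : ∀ x, F x = (volume {ω | X ω ≤ x}).toReal)
    (hcont : Continuous F) (hsmono : StrictMonoOn F (Set.Ici (0:ℝ)))
    (h0 : F 0 = 0)
    (μ : ℝ) (hμ : μ = ∫ ω, X ω) (hμpos : 0 < μ) :
    (∀ t : ℝ, 0 ≤ t → volume {ω | t < X ω} ≠ 0 →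
        (∫ x in Set.Ioi t, (1 - F x)) / (1 - F t) ≤ μ)
    ↔ (∀ p ∈ Set.Icc (0:ℝ) 1,
        p * μ ≤ ∫ x in {x : ℝ | 0 < x ∧
            (x : EReal) < sInf ((fun u : ℝ => (u : EReal)) '' {u : ℝ | p ≤ F u})},
          (1 - F x)) :=
  nbue_iff_scaled_ttt_dominates_id_general X hnonneg hint F hF hcont μ hμ
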